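/- arXiv:2406.06344 — 2 statements merged into one kernel-verified Lean document; each statement's English description precedes it below -/
import Mathlib

section
/- Let n ≥ 1 be an integer, let α < β be real numbers, let ζ_1,…,ζ_n be the Chebyshev nodes of the first kind in [−1,1], and let η_k = ((α−β)/2)·ζ_k + (α+β)/2 be the scaled nodes in [α,β]. Then for every x ∈ [α,β], Σ_{k=1}^{n} | 1/n + (2/n)·Σ_{m=1}^{n−1} T_m(ζ_k)·T_m((2x − (α+β))/(α−β)) | ≤ (2/π)·log(n) + 1; that is, the ℓ1 norm of the vector of scaled Chebyshev basis polynomials evaluated at any point of [α,β] is at most (2/π)log(n) + 1. -/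
open Real Finset

/-- Chebyshev polynomial of the first kind of degree `m`, evaluated at `x`. -/
noncomputable def chebT (m : ℕ) (x : ℝ) : ℝ :=
  (Polynomial.Chebyshev.T ℝ m).eval x

/-- The `k`-th Chebyshev node of the first kind in `[-1, 1]` among `n` nodes,
for `1 ≤ k ≤ n`: `ζ_k = cos((2k−1)π/(2n))`. -/
noncomputable def chebNode (n k : ℕ) : ℝ :=
  Real.cos ((2 * (k : ℝ) - 1) * Real.pi / (2 * (n : ℝ)))

/-- The `k`-th scaled Chebyshev node on `[α, β]`:
`η_k = ((α−β)/2)·ζ_k + (α+β)/2`. -/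
noncomputable def scaledChebNode (n k : ℕ) (α β : ℝ) : ℝ :=
  ((α - β) / 2) * chebNode n k + (α + β) / 2

/-- The Chebyshev basis polynomial on `[α, β]`:
`φ^{[α,β]}(η_i, x) = 1/n + (2/n)·Σ_{m=1}^{n−1} T_m(ζ_i)·T_m((2x − (α+β))/(α−β))`. -/
noncomputable def scaledChebBasis (n i : ℕ) (α β : ℝ) (x : ℝ) : ℝ :=
  1 / (n : ℝ) + (2 / (n : ℝ)) *
    ∑ m ∈ Finset.Icc 1 (n - 1),
      chebT m (chebNode n i) * chebT m ((2 * x - (α + β)) / (α - β))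

/-!
Write `x = cos θ` and `ψ_k = (2k-1)π/(2n)`. The Christoffel–Darboux identity for cosines gives
`n φ_k (cos θ - cos ψ_k) = cos (nθ) cos ((n-1)ψ_k)`, and `|cos ((n-1)ψ_k)| ≤ |sin ψ_k|` because
`cos (nψ_k) = 0`. Writing `sin ψ_k = sin (v - u)` with `u, v = (θ ∓ ψ_k)/2` gives
`|φ_k| ≤ |cos nθ| / (2n) · (|cot u| + |cot v|)`.

Modulo `π`, the `2n` half-angles `(θ ± ψ_k)/2` form an arithmetic progression with step `π/(2n)`,
so the cotangent sum is `π/(2n)`-periodic in `θ/2` and we may assume `|θ| < π/(2n)`. There the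
half-angles pair off symmetrically about `b_k = (2k+1)π/(4n)`, and
`sin ε sin (π/4) ≤ sin (nε) sin (π/(4n))` shows that each pair is at most its value at `θ = 0`.
So the Lebesgue function is at most `(1/n) Σ cot b_k`, its value at `x = 1`, and this is at most
`(2/π) log n + 1` by `cot x ≤ 1/x - x/3` and `Σ_{k<n} 1/(2k+1) ≤ (log n)/2 + π/4 + π²/48`.
At the nodes, where the division by `cos θ - cos ψ_k` fails, the bound follows by continuity.
-/

lemma cot_add_pi (x : ℝ) : cot (x + π) = cot x := by
  rw [cot_eq_cos_div_sin, cot_eq_cos_div_sin, cos_add_pi, sin_add_pi, neg_div_neg_eq]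

lemma abs_cot_neg (x : ℝ) : |cot (-x)| = |cot x| := by
  rw [cot_eq_cos_div_sin, cot_eq_cos_div_sin, cos_neg, sin_neg, div_neg, abs_neg]

lemma cot_nonneg {x : ℝ} (hx : 0 < x) (hxπ : x ≤ π / 2) : 0 ≤ cot x := by
  rw [cot_eq_cos_div_sin]
  exact div_nonneg (cos_nonneg_of_mem_Icc ⟨by linarith, hxπ⟩)
    (sin_nonneg_of_nonneg_of_le_pi hx.le (by linarith))

lemma cot_add_cot {x y : ℝ} (hx : sin x ≠ 0) (hy : sin y ≠ 0) :
    cot x + cot y = sin (x + y) / (sin x * sin y) := by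
  rw [cot_eq_cos_div_sin, cot_eq_cos_div_sin, div_add_div _ _ hx hy, sin_add]
  ring

lemma sin_sub_mul_sin_add (x y : ℝ) : sin (x - y) * sin (x + y) = sin x ^ 2 - sin y ^ 2 := by
  rw [sin_sub, sin_add]
  linear_combination (-sin y ^ 2) * sin_sq_add_cos_sq x + sin x ^ 2 * sin_sq_add_cos_sq y

lemma abs_sin_sub_le {u v : ℝ} (hu : sin u ≠ 0) (hv : sin v ≠ 0) :
    |sin (v - u)| ≤ |sin u| * |sin v| * (|cot u| + |cot v|) := by
  have hcot : ∀ x, sin x ≠ 0 → |cot x| * |sin x| = |cos x| := fun x hx => by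
    rw [cot_eq_cos_div_sin, abs_div, div_mul_cancel₀ _ (abs_ne_zero.2 hx)]
  calc |sin (v - u)| = |sin v * cos u - cos v * sin u| := by rw [sin_sub]
    _ ≤ |sin v * cos u| + |cos v * sin u| := abs_sub _ _
    _ = |sin u| * |sin v| * (|cot u| + |cot v|) := by
      rw [abs_mul, abs_mul, ← hcot u hu, ← hcot v hv]; ring

lemma abs_cos_sub_one_mul_le_abs_sin {a ψ : ℝ} (h : cos (a * ψ) = 0) :
    |cos ((a - 1) * ψ)| ≤ |sin ψ| := by
  rw [sub_one_mul, cos_sub, h, zero_mul, zero_add, abs_mul]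
  exact mul_le_of_le_one_left (abs_nonneg _) (abs_sin_le_one _)

lemma sin_nat_mul_eq_sin_mul_sum_cos (n : ℕ) (x : ℝ) :
    sin (n * x) = sin x * ∑ j ∈ range n, cos ((2 * j - n + 1) * x) := by
  have htel := sum_range_sub (fun j : ℕ => sin ((2 * j - n) * x)) n
  have hterm : ∀ j : ℕ, sin ((2 * ((j + 1 : ℕ) : ℝ) - n) * x) - sin ((2 * j - n) * x)
      = 2 * (sin x * cos ((2 * j - n + 1) * x)) := by
    intro j
    rw [← mul_assoc, two_mul_sin_mul_cos]
    push_cast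
    rw [show x - (2 * j - n + 1) * x = -((2 * j - n) * x) by ring, sin_neg]
    ring_nf
  simp only [hterm, Nat.cast_zero, mul_zero, zero_sub, neg_mul, sin_neg] at htel
  rw [← mul_sum, show (2 * (n : ℝ) - n) * x = n * x by ring] at htel
  rw [mul_sum]
  linarith

lemma sin_mul_sin_nat_mul_le {n : ℕ} {e B : ℝ} (he : 0 ≤ e) (heB : e ≤ B) (hB : n * B ≤ π) :
    sin e * sin (n * B) ≤ sin (n * e) * sin B := by
  obtain rfl | hn := Nat.eq_zero_or_pos n
  · simp
  have hn1 : (1 : ℝ) ≤ n := by exact_mod_cast hn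
  have hBπ : B ≤ π := by nlinarith
  have hcos : ∀ j ∈ range n, cos ((2 * j - n + 1) * B) ≤ cos ((2 * j - n + 1) * e) := by
    intro j hj
    have hjn : (j : ℝ) + 1 ≤ n := by exact_mod_cast mem_range.1 hj
    have ha : |(2 * j - n + 1 : ℝ)| ≤ n := abs_le.2 ⟨by linarith, by linarith⟩
    rw [← cos_abs ((_ : ℝ) * e), ← cos_abs ((_ : ℝ) * B), abs_mul, abs_mul,
      abs_of_nonneg he, abs_of_nonneg (he.trans heB)]
    exact cos_le_cos_of_nonneg_of_le_pi (by positivity)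
      (by nlinarith [abs_nonneg (2 * j - n + 1 : ℝ)]) (mul_le_mul_of_nonneg_left heB (abs_nonneg _))
  have hsin : 0 ≤ sin e * sin B :=
    mul_nonneg (sin_nonneg_of_nonneg_of_le_pi he (heB.trans hBπ))
      (sin_nonneg_of_nonneg_of_le_pi (he.trans heB) hBπ)
  rw [sin_nat_mul_eq_sin_mul_sum_cos, sin_nat_mul_eq_sin_mul_sum_cos]
  nlinarith [mul_le_mul_of_nonneg_left (sum_le_sum hcos) hsin]

lemma cot_le_inv_sub_div_three {x : ℝ} (hx : 0 < x) (hx3 : x ^ 2 ≤ 3) :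
    cot x ≤ 1 / x - x / 3 := by
  have hxπ : x < π := by nlinarith [pi_gt_three]
  have hsin : 0 < sin x := sin_pos_of_pos_of_lt_pi hx hxπ
  have hsin_lower := sin_ge_sub_cube hx.le
  have hhalf_lower := sin_ge_sub_cube (half_pos hx).le
  have hcos_upper : cos x ≤ 1 - x ^ 2 / 2 + x ^ 4 / 24 := by
    have hdouble : cos x = 1 - 2 * sin (x / 2) ^ 2 := by
      rw [← cos_two_mul_eq_one_sub, mul_div_cancel₀ x two_ne_zero]
    have h0 : 0 ≤ x / 2 - (x / 2) ^ 3 / 6 := by nlinarith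
    rw [hdouble]
    nlinarith [pow_le_pow_left₀ h0 hhalf_lower 2, sq_nonneg (x ^ 3)]
  rw [cot_eq_cos_div_sin, div_le_iff₀ hsin,
    show (1 / x - x / 3) * sin x = (3 - x ^ 2) * sin x / (3 * x) by field_simp,
    le_div_iff₀ (by positivity)]
  -- with the two Taylor bounds, this reduces to `x ^ 5 / 24 ≤ x ^ 5 / 18`
  nlinarith [mul_le_mul_of_nonneg_left hsin_lower (by linarith : (0 : ℝ) ≤ 3 - x ^ 2),
    mul_le_mul_of_nonneg_left hcos_upper (by positivity : (0 : ℝ) ≤ 3 * x), pow_pos hx 5]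

lemma chebT_cos (m : ℕ) (θ : ℝ) : chebT m (cos θ) = cos (m * θ) := by
  rw [chebT, Polynomial.Chebyshev.T_real_cos, Int.cast_natCast]

noncomputable def chebAngle (n k : ℕ) : ℝ := (2 * (k : ℝ) - 1) * π / (2 * n)

noncomputable def chebBasisTrig (n : ℕ) (ψ θ : ℝ) : ℝ :=
  1 / n + 2 / n * ∑ m ∈ Icc 1 (n - 1), cos (m * ψ) * cos (m * θ)

lemma scaledChebBasis_eq_chebBasisTrig {n k : ℕ} {α β x θ : ℝ}
    (hθ : (2 * x - (α + β)) / (α - β) = cos θ) :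
    scaledChebBasis n k α β x = chebBasisTrig n (chebAngle n k) θ := by
  simp only [scaledChebBasis, chebBasisTrig, chebNode, hθ, chebT_cos, chebAngle]

lemma cos_nat_mul_chebAngle {n : ℕ} (hn : n ≠ 0) (k : ℕ) : cos (n * chebAngle n k) = 0 := by
  rw [chebAngle, show (n : ℝ) * ((2 * k - 1) * π / (2 * n)) = (2 * ((k : ℤ) - 1 : ℤ) + 1) * π / 2 by
    push_cast; field_simp; ring]
  exact cos_eq_zero_iff.2 ⟨_, rfl⟩

lemma cos_ne_cos_of_cos_nat_mul_ne_zero {n : ℕ} {θ ψ : ℝ} (hθ : cos (n * θ) ≠ 0)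
    (hψ : cos (n * ψ) = 0) : cos θ ≠ cos ψ := by
  intro h
  apply hθ
  rw [← chebT_cos, h, chebT_cos, hψ]

lemma christoffel_darboux_cos (θ ψ : ℝ) (N : ℕ) :
    (1 + 2 * ∑ m ∈ Icc 1 N, cos (m * ψ) * cos (m * θ)) * (cos θ - cos ψ)
      = cos ((N + 1) * θ) * cos (N * ψ) - cos (N * θ) * cos ((N + 1) * ψ) := by
  induction N with
  | zero => simp
  | succ N ih =>
    rw [sum_Icc_succ_top (by omega)]
    push_cast
    have hcos : ∀ x : ℝ, cos ((N + 1 + 1) * x) + cos (N * x) = 2 * cos ((N + 1) * x) * cos x :=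
      fun x => by rw [cos_add_cos]; ring_nf
    linear_combination ih - cos ((N + 1) * ψ) * hcos θ + cos ((N + 1) * θ) * hcos ψ

lemma chebBasisTrig_mul_cos_sub_cos {n : ℕ} (hn : n ≠ 0) {ψ : ℝ} (hψ : cos (n * ψ) = 0) (θ : ℝ) :
    n * chebBasisTrig n ψ θ * (cos θ - cos ψ) = cos (n * θ) * cos ((n - 1) * ψ) := by
  have hcd := christoffel_darboux_cos θ ψ (n - 1)
  rw [Nat.cast_pred (Nat.pos_of_ne_zero hn), sub_add_cancel, hψ, mul_zero, sub_zero] at hcd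
  have hn' : (n : ℝ) ≠ 0 := Nat.cast_ne_zero.2 hn
  rw [chebBasisTrig, ← hcd, mul_add, ← mul_assoc, mul_one_div_cancel hn',
    show (n : ℝ) * (2 / n) = 2 by field_simp]

lemma abs_chebBasisTrig_le {n : ℕ} (hn : n ≠ 0) {ψ θ : ℝ} (hψ : cos (n * ψ) = 0)
    (hθ : cos θ ≠ cos ψ) :
    |chebBasisTrig n ψ θ|
      ≤ |cos (n * θ)| / (2 * n) * (|cot ((θ - ψ) / 2)| + |cot ((θ + ψ) / 2)|) := by
  set u := (θ - ψ) / 2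
  set v := (θ + ψ) / 2
  have hdiff : cos θ - cos ψ = -2 * sin v * sin u := cos_sub_cos θ ψ
  have hu : sin u ≠ 0 := fun h => hθ (by rw [← sub_eq_zero, hdiff, h]; ring)
  have hv : sin v ≠ 0 := fun h => hθ (by rw [← sub_eq_zero, hdiff, h]; ring)
  have hn' : (0 : ℝ) < n := by positivity
  have hsin : 0 < |sin u| * |sin v| := by positivity
  have hident := congrArg abs (chebBasisTrig_mul_cos_sub_cos hn hψ θ)
  rw [abs_mul, abs_mul, abs_mul, hdiff, abs_of_pos hn'] at hident
  rw [div_mul_eq_mul_div, le_div_iff₀ (by positivity), ← mul_le_mul_iff_of_pos_right hsin]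
  calc |chebBasisTrig n ψ θ| * (2 * n) * (|sin u| * |sin v|)
      = |cos (n * θ)| * |cos ((n - 1) * ψ)| := by
        rw [← hident, abs_mul, abs_mul, abs_neg, abs_two]; ring
    _ ≤ |cos (n * θ)| * (|sin u| * |sin v| * (|cot u| + |cot v|)) := by
        gcongr
        calc |cos ((n - 1) * ψ)| ≤ |sin ψ| := abs_cos_sub_one_mul_le_abs_sin hψ
          _ = |sin (v - u)| := by congr 2; ring
          _ ≤ _ := abs_sin_sub_le hu hv
    _ = _ := by ring

lemma sum_range_odd_sub_add_periodic {g : ℝ → ℝ} {n : ℕ} {c : ℝ}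
    (hg : Function.Periodic g (4 * n * c)) :
    Function.Periodic (fun φ => ∑ k ∈ range n, (g (φ - (2 * k + 1) * c) + g (φ + (2 * k + 1) * c)))
      (2 * c) := by
  intro φ
  rcases n with _ | m
  · simp
  simp only [sum_add_distrib]
  rw [sum_range_succ' (fun k : ℕ => g (φ + 2 * c - (2 * k + 1) * c)),
    sum_range_succ (fun k : ℕ => g (φ + 2 * c + (2 * k + 1) * c)),
    sum_range_succ (fun k : ℕ => g (φ - (2 * k + 1) * c)),
    sum_range_succ' (fun k : ℕ => g (φ + (2 * k + 1) * c))]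
  have hwrap : g (φ + 2 * c + (2 * m + 1) * c) = g (φ - (2 * m + 1) * c) := by
    rw [← hg (φ - _)]; push_cast; ring_nf
  rw [hwrap, show φ + 2 * c - (2 * ((0 : ℕ) : ℝ) + 1) * c = φ + (2 * ((0 : ℕ) : ℝ) + 1) * c by
    push_cast; ring]
  push_cast
  simp only [show ∀ k : ℝ, φ + 2 * c - (2 * (k + 1) + 1) * c = φ - (2 * k + 1) * c from
    fun k => by ring, show ∀ k : ℝ, φ + 2 * c + (2 * k + 1) * c = φ + (2 * (k + 1) + 1) * c from
    fun k => by ring]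
  abel

noncomputable def cotSum (n : ℕ) (φ : ℝ) : ℝ :=
  ∑ k ∈ range n,
    (|cot (φ - (2 * k + 1) * (π / (4 * n)))| + |cot (φ + (2 * k + 1) * (π / (4 * n)))|)

lemma cotSum_periodic {n : ℕ} (hn : n ≠ 0) : Function.Periodic (cotSum n) (π / (2 * n)) := by
  have hg : Function.Periodic (fun x => |cot x|) (4 * n * (π / (4 * n))) := fun x => by
    dsimp only
    rw [show 4 * n * (π / (4 * n)) = π by field_simp, cot_add_pi]
  have h := sum_range_odd_sub_add_periodic hg
  rwa [show 2 * (π / (4 * n)) = π / (2 * n) by field_simp; ring] at h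

lemma sum_abs_cot_chebAngle_eq_cotSum (n : ℕ) (θ : ℝ) :
    ∑ k ∈ Icc 1 n, (|cot ((θ - chebAngle n k) / 2)| + |cot ((θ + chebAngle n k) / 2)|)
      = cotSum n (θ / 2) := by
  rw [← Ico_add_one_right_eq_Icc, sum_Ico_eq_sum_range, Nat.add_sub_cancel, cotSum]
  refine sum_congr rfl fun k _ => ?_
  simp only [chebAngle]
  push_cast
  congr 3 <;> ring

lemma sin_sq_le_two_mul_sin_nat_mul_sq_mul_sin_sq {n : ℕ} (hn : 0 < n) {ε b : ℝ} (hε0 : 0 ≤ ε)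
    (hε : ε ≤ π / (4 * n)) (hb : π / (4 * n) ≤ b) (hbπ : b ≤ π / 2) :
    sin ε ^ 2 ≤ 2 * sin (n * ε) ^ 2 * sin b ^ 2 := by
  have hn' : (0 : ℝ) < n := by exact_mod_cast hn
  have hnε : n * ε ≤ π / 4 := by
    have := mul_le_mul_of_nonneg_left hε hn'.le
    rwa [show (n : ℝ) * (π / (4 * n)) = π / 4 by field_simp] at this
  have h := sin_mul_sin_nat_mul_le hε0 hε (by field_simp; linarith [pi_pos])
  rw [show (n : ℝ) * (π / (4 * n)) = π / 4 by field_simp, sin_pi_div_four] at h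
  have hmono : sin (π / (4 * n)) ≤ sin b :=
    sin_le_sin_of_le_of_le_pi_div_two (by linarith [pi_pos]) hbπ hb
  have hsin_nε : 0 ≤ sin (n * ε) :=
    sin_nonneg_of_nonneg_of_le_pi (by positivity) (by linarith [pi_pos])
  have hsin_ε : 0 ≤ sin ε := sin_nonneg_of_nonneg_of_le_pi hε0 (by linarith [pi_pos])
  have h2 : sin ε * (√2 / 2) ≤ sin (n * ε) * sin b :=
    h.trans (mul_le_mul_of_nonneg_left hmono hsin_nε)
  have hs2 : √2 ^ 2 = 2 := sq_sqrt zero_le_two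
  nlinarith [pow_le_pow_left₀ (mul_nonneg hsin_ε (by positivity)) h2 2]

lemma cos_two_mul_mul_cot_sub_add_cot_add_le {a b ε : ℝ} (hε0 : 0 ≤ ε) (hεb : ε < b)
    (hb : b + ε ≤ π / 2) (h : sin ε ^ 2 ≤ 2 * sin a ^ 2 * sin b ^ 2) :
    cos (2 * a) * (cot (b - ε) + cot (b + ε)) ≤ 2 * cot b := by
  have hsin_sub : 0 < sin (b - ε) := sin_pos_of_pos_of_lt_pi (by linarith) (by linarith)
  have hsin_add : 0 < sin (b + ε) := sin_pos_of_pos_of_lt_pi (by linarith) (by linarith)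
  have hsin_b : 0 < sin b := sin_pos_of_pos_of_lt_pi (by linarith) (by linarith)
  have hcos_b : 0 ≤ cos b := cos_nonneg_of_mem_Icc ⟨by linarith, by linarith⟩
  have hD : 0 < sin b ^ 2 - sin ε ^ 2 := by
    have : sin ε < sin b :=
      sin_lt_sin_of_lt_of_le_pi_div_two (by linarith) (by linarith) hεb
    nlinarith [sin_nonneg_of_nonneg_of_le_pi hε0 (by linarith)]
  rw [cot_add_cot hsin_sub.ne' hsin_add.ne', sin_sub_mul_sin_add, cot_eq_cos_div_sin,
    show b - ε + (b + ε) = 2 * b by ring, sin_two_mul, cos_two_mul_eq_one_sub, mul_div_assoc',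
    div_le_iff₀ hD, ← sub_nonneg]
  have hfactor : 2 * (cos b / sin b) * (sin b ^ 2 - sin ε ^ 2)
      - (1 - 2 * sin a ^ 2) * (2 * sin b * cos b)
      = 2 * cos b / sin b * (2 * sin a ^ 2 * sin b ^ 2 - sin ε ^ 2) := by
    field_simp; ring
  rw [hfactor]
  exact mul_nonneg (by positivity) (by linarith)

lemma cos_mul_abs_cot_add_abs_cot_le {n : ℕ} {b δ : ℝ} (hn : 0 < n) (hδ : |δ| < π / (2 * n))
    (hb : π / (4 * n) ≤ b) (hb' : b + π / (4 * n) ≤ π / 2) :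
    cos (n * δ) * (|cot (b - δ / 2)| + |cot (b + δ / 2)|) ≤ 2 * cot b := by
  wlog hδ0 : 0 ≤ δ generalizing δ
  · have := this (δ := -δ) (by rwa [abs_neg]) (by linarith)
    rwa [mul_neg, cos_neg, neg_div, sub_neg_eq_add, ← sub_eq_add_neg,
      add_comm |cot (b + _)|] at this
  have hε : δ / 2 < π / (4 * n) := by
    rw [abs_of_nonneg hδ0, show π / (2 * n) = 2 * (π / (4 * n)) by field_simp; ring] at hδ
    linarith
  rw [abs_of_nonneg (cot_nonneg (by linarith) (by linarith)),
    abs_of_nonneg (cot_nonneg (by linarith) (by linarith)),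
    show (n : ℝ) * δ = 2 * (n * (δ / 2)) by ring]
  exact cos_two_mul_mul_cot_sub_add_cot_add_le (by positivity) (by linarith) (by linarith)
    (sin_sq_le_two_mul_sin_nat_mul_sq_mul_sin_sq hn (by positivity) hε.le hb (by linarith))

lemma inv_two_mul_add_one_le_half_log_sub {N : ℝ} (hN : 0 < N) :
    1 / (2 * N + 1) ≤ (log (N + 1) - log N) / 2 := by
  have h := le_hasSum (hasSum_log_one_add_inv hN) 0 (fun k _ => by positivity)
  rw [show 1 + N⁻¹ = (N + 1) / N by field_simp, log_div (by positivity) hN.ne'] at h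
  norm_num at h
  rw [one_div]
  linarith

/-- The constant `π / 4 + π ^ 2 / 48` is what `sum_cot_odd_le` needs; at `n = 2` the bound holds
with a margin of about `0.004`. -/
lemma sum_inv_odd_le {n : ℕ} (hn : 2 ≤ n) :
    ∑ s ∈ range n, 1 / (2 * (s : ℝ) + 1) ≤ log n / 2 + (π / 4 + π ^ 2 / 48) := by
  induction n, hn using Nat.le_induction with
  | base =>
    norm_num [sum_range_succ]
    nlinarith [pi_gt_d2, log_two_gt_d9]
  | succ N hN ih =>
    rw [sum_range_succ, Nat.cast_succ]
    have := inv_two_mul_add_one_le_half_log_sub (N := N) (by positivity)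
    linarith

lemma sum_range_two_mul_add_one (n : ℕ) : ∑ s ∈ range n, (2 * (s : ℝ) + 1) = n ^ 2 := by
  induction n with
  | zero => simp
  | succ n ih => rw [sum_range_succ, ih]; push_cast; ring

lemma sum_cot_odd_le {n : ℕ} (hn : 0 < n) :
    ∑ s ∈ range n, cot ((2 * s + 1) * (π / (4 * n))) ≤ n * (2 / π * log n + 1) := by
  obtain rfl | hn2 : n = 1 ∨ 2 ≤ n := by omega
  · norm_num [cot_eq_cos_div_sin]
  have hterm : ∀ s ∈ range n, cot ((2 * s + 1) * (π / (4 * n)))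
      ≤ 4 * n / π * (1 / (2 * s + 1)) - π / (12 * n) * (2 * s + 1) := by
    intro s hs
    have hsn : (s : ℝ) + 1 ≤ n := by exact_mod_cast mem_range.1 hs
    have hx : 0 < (2 * s + 1) * (π / (4 * n)) := by positivity
    have hle : (2 * s + 1) * (π / (4 * n)) ≤ π / 2 := by
      rw [mul_div_assoc', div_le_div_iff₀ (by positivity) two_pos]; nlinarith [pi_pos]
    have hsq : ((2 * s + 1) * (π / (4 * n))) ^ 2 ≤ 3 := by
      have hπ2 : (π / 2) ^ 2 ≤ 3 := by nlinarith [pi_lt_d2, pi_pos]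
      linarith [pow_le_pow_left₀ hx.le hle 2]
    refine (cot_le_inv_sub_div_three hx hsq).trans_eq ?_
    field_simp
    ring
  calc ∑ s ∈ range n, cot ((2 * s + 1) * (π / (4 * n)))
      ≤ ∑ s ∈ range n, (4 * n / π * (1 / (2 * s + 1)) - π / (12 * n) * (2 * s + 1)) :=
        sum_le_sum hterm
    _ = 4 * n / π * ∑ s ∈ range n, 1 / (2 * (s : ℝ) + 1) - π / (12 * n) * n ^ 2 := by
        rw [sum_sub_distrib, ← mul_sum, ← mul_sum, sum_range_two_mul_add_one]
    _ ≤ 4 * n / π * (log n / 2 + (π / 4 + π ^ 2 / 48)) - π / (12 * n) * n ^ 2 := by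
        gcongr; exact sum_inv_odd_le hn2
    _ = n * (2 / π * log n + 1) := by field_simp; ring

lemma cos_mul_cotSum_le {n : ℕ} (hn : 0 < n) {δ : ℝ} (hδ : |δ| < π / (2 * n)) :
    cos (n * δ) * cotSum n (δ / 2) ≤ 2 * n * (2 / π * log n + 1) := by
  have hn' : (0 : ℝ) < n := by exact_mod_cast hn
  have hpair : ∀ k ∈ range n, cos (n * δ) * (|cot (δ / 2 - (2 * k + 1) * (π / (4 * n)))|
      + |cot (δ / 2 + (2 * k + 1) * (π / (4 * n)))|) ≤ 2 * cot ((2 * k + 1) * (π / (4 * n))) := by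
    intro k hk
    have hkn : (k : ℝ) + 1 ≤ n := by exact_mod_cast mem_range.1 hk
    rw [← abs_cot_neg, neg_sub, add_comm (δ / 2)]
    refine cos_mul_abs_cot_add_abs_cot_le hn hδ
      (le_mul_of_one_le_left (by positivity) (by linarith [k.cast_nonneg (α := ℝ)])) ?_
    rw [show (2 * k + 1) * (π / (4 * n)) + π / (4 * n) = (k + 1) / n * (π / 2) by
      field_simp; ring]
    exact mul_le_of_le_one_left (by positivity) (div_le_one_of_le₀ hkn hn'.le)
  calc cos (n * δ) * cotSum n (δ / 2)
      ≤ ∑ k ∈ range n, 2 * cot ((2 * k + 1) * (π / (4 * n))) := by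
        rw [cotSum, mul_sum]; exact sum_le_sum hpair
    _ ≤ 2 * (n * (2 / π * log n + 1)) := by rw [← mul_sum]; gcongr; exact sum_cot_odd_le hn
    _ = 2 * n * (2 / π * log n + 1) := by ring

lemma abs_cos_mul_cotSum_le {n : ℕ} (hn : 0 < n) {θ : ℝ} (hθ : cos (n * θ) ≠ 0) :
    |cos (n * θ)| * cotSum n (θ / 2) ≤ 2 * n * (2 / π * log n + 1) := by
  have hn' : (0 : ℝ) < n := by exact_mod_cast hn
  set j := round (n * θ / π)
  set δ := θ - j * (π / n) with hδ_def
  have hnθ : n * θ = n * δ + j * π := by rw [hδ_def]; field_simp; ring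
  have hcos : cos (n * θ) = (-1) ^ j * cos (n * δ) := by rw [hnθ, cos_add_int_mul_pi]
  have hnδ : |n * δ| ≤ π / 2 := by
    rw [show n * δ = π * (n * θ / π - j) by rw [hδ_def]; field_simp, abs_mul,
      abs_of_pos pi_pos]
    linarith [mul_le_mul_of_nonneg_left (abs_sub_round (n * θ / π)) pi_pos.le]
  have hnδ_lt : |n * δ| < π / 2 := by
    refine hnδ.lt_of_ne fun h => hθ ?_
    rw [hcos, ← cos_abs (n * δ), h, cos_pi_div_two, mul_zero]
  have hδ : |δ| < π / (2 * n) := by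
    rw [abs_mul, abs_of_pos hn'] at hnδ_lt
    rw [lt_div_iff₀ (by positivity)]
    linarith
  have hperiod : cotSum n (θ / 2) = cotSum n (δ / 2) := by
    rw [← (cotSum_periodic hn.ne').sub_int_mul_eq j]
    congr 1
    rw [hδ_def]
    field_simp
  rw [hcos, abs_mul, abs_neg_one_zpow, one_mul, hperiod,
    abs_of_nonneg (cos_nonneg_of_mem_Icc (abs_le.1 hnδ))]
  exact cos_mul_cotSum_le hn hδ

lemma sum_abs_chebBasisTrig_le_of_cos_ne_zero {n : ℕ} (hn : 0 < n) {θ : ℝ}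
    (hθ : cos (n * θ) ≠ 0) :
    ∑ k ∈ Icc 1 n, |chebBasisTrig n (chebAngle n k) θ| ≤ 2 / π * log n + 1 := by
  calc ∑ k ∈ Icc 1 n, |chebBasisTrig n (chebAngle n k) θ|
      ≤ ∑ k ∈ Icc 1 n, |cos (n * θ)| / (2 * n)
          * (|cot ((θ - chebAngle n k) / 2)| + |cot ((θ + chebAngle n k) / 2)|) :=
        sum_le_sum fun k _ => abs_chebBasisTrig_le hn.ne' (cos_nat_mul_chebAngle hn.ne' k)
          (cos_ne_cos_of_cos_nat_mul_ne_zero hθ (cos_nat_mul_chebAngle hn.ne' k))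
    _ = |cos (n * θ)| * cotSum n (θ / 2) / (2 * n) := by
        rw [← mul_sum, sum_abs_cot_chebAngle_eq_cotSum]; ring
    _ ≤ 2 * n * (2 / π * log n + 1) / (2 * n) :=
        div_le_div_of_nonneg_right (abs_cos_mul_cotSum_le hn hθ) (by positivity)
    _ = 2 / π * log n + 1 := by field_simp

lemma sum_abs_chebBasisTrig_le {n : ℕ} (hn : 0 < n) (θ : ℝ) :
    ∑ k ∈ Icc 1 n, |chebBasisTrig n (chebAngle n k) θ| ≤ 2 / π * log n + 1 := by
  have hzeros : {θ : ℝ | cos (n * θ) = 0}.Countable := by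
    refine (Set.countable_range fun j : ℤ => (2 * j + 1) * π / 2 / n).mono fun θ hθ => ?_
    obtain ⟨j, hj⟩ := cos_eq_zero_iff.1 hθ
    exact ⟨j, by dsimp only; rw [← hj]; field_simp⟩
  have hcont : Continuous fun θ => ∑ k ∈ Icc 1 n, |chebBasisTrig n (chebAngle n k) θ| := by
    unfold chebBasisTrig; fun_prop
  have hsub : closure {θ : ℝ | cos (n * θ) = 0}ᶜ
      ⊆ {θ | ∑ k ∈ Icc 1 n, |chebBasisTrig n (chebAngle n k) θ| ≤ 2 / π * log n + 1} :=
    closure_minimal (fun θ hθ => sum_abs_chebBasisTrig_le_of_cos_ne_zero hn hθ)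
      (isClosed_le hcont continuous_const)
  exact hsub ((hzeros.dense_compl ℝ).closure_eq ▸ Set.mem_univ θ)

theorem scaled_cheb_basis_abs_sum_le_general (n : ℕ) (hn : 1 ≤ n)
    (α β : ℝ) (x : ℝ) (hx : x ∈ Set.Icc α β) :
    ∑ k ∈ Finset.Icc 1 n, |scaledChebBasis n k α β x| ≤
      (2 / Real.pi) * Real.log n + 1 := by
  obtain ⟨hαx, hxβ⟩ := hx
  have ht : |(2 * x - (α + β)) / (α - β)| ≤ 1 := by
    rw [abs_div, abs_sub_comm α β, abs_of_nonneg (by linarith : 0 ≤ β - α)]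
    exact div_le_one_of_le₀ (abs_le.2 ⟨by linarith, by linarith⟩) (by linarith)
  have hθ := (cos_arccos (abs_le.1 ht).1 (abs_le.1 ht).2).symm
  simp_rw [scaledChebBasis_eq_chebBasisTrig hθ]
  exact sum_abs_chebBasisTrig_le hn _

/-- The ℓ1 norm of the vector of scaled Chebyshev basis polynomials evaluated at any
point of `[α, β]` is at most `(2/π)·log(n) + 1`. -/
theorem scaled_cheb_basis_abs_sum_le (n : ℕ) (hn : 1 ≤ n)
    (α β : ℝ) (hab : α < β) (x : ℝ) (hx : x ∈ Set.Icc α β) :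
    ∑ k ∈ Finset.Icc 1 n, |scaledChebBasis n k α β x| ≤
      (2 / Real.pi) * Real.log n + 1 :=
  scaled_cheb_basis_abs_sum_le_general n hn α β x hx
end

section
/- Let N, n, r_1, r_2, r_3 be positive integers, and let U_1, U_2, U_3 ∈ ℝ^{N×n}, G_1 ∈ ℝ^{n×r_1}, G_2 a real matrix with rows indexed by pairs in {1,…,n}×{1,…,r_1} and columns indexed by {1,…,r_2}, and G_3 a real matrix with rows indexed by pairs in {1,…,n}×{1,…,r_2} and columns indexed by {1,…,r_3}. Then (U_3 ⋉ (U_2 ⋉ U_1)) · (I_n ⊗ (I_n ⊗ G_1)) · (I_n ⊗ G_2) · G_3 = (U_3 ⋉ ((U_2 ⋉ (U_1·G_1))·G_2)) · G_3; that is, the product of the face-split source matrix with the chain of Kronecker-lifted tensor-train core unfoldings can be computed by the recursion S = U_1·G_1, S ← (U_2 ⋉ S)·G_2, S ← (U_3 ⋉ S)·G_3. -/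
open Matrix Kronecker

/-- The face-splitting (row-wise Kronecker, transposed Khatri-Rao) product of
`A : ℝ^{q×s}` and `B : ℝ^{q×p}`: the matrix of size `q × (s·p)` whose `i`-th row
is the Kronecker product of the `i`-th rows of `A` and `B`. -/
def faceSplit {q : ℕ} {σ π : Type*} (A : Matrix (Fin q) σ ℝ) (B : Matrix (Fin q) π ℝ) :
    Matrix (Fin q) (σ × π) ℝ :=
  fun i jk => A i jk.1 * B i jk.2

lemma faceSplit_mul_one_kron {q n : ℕ} {σ τ : Type*} [Fintype σ] [DecidableEq σ] [Fintype τ]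
    (A : Matrix (Fin q) (Fin n) ℝ) (B : Matrix (Fin q) σ ℝ) (G : Matrix σ τ ℝ) :
    faceSplit A B * ((1 : Matrix (Fin n) (Fin n) ℝ) ⊗ₖ G) = faceSplit A (B * G) := by
  ext i jl
  obtain ⟨j, l⟩ := jl
  simp only [mul_apply, faceSplit, kroneckerMap_apply, Matrix.one_apply]
  rw [Fintype.sum_prod_type]
  simp [Finset.mul_sum, mul_assoc, mul_ite, mul_comm]
  exact Finset.sum_congr rfl fun k _ => by ring

/-- The `d = 3` correctness identity for Phase 3 of the offline algorithm
(Algorithm 3.2 of the paper): the product of the face-split source matrix with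
the chain of Kronecker-lifted tensor-train core unfoldings can be computed by
the recursion `S = U₁·G₁`, `S ← (U₂ ⋉ S)·G₂`, `S ← (U₃ ⋉ S)·G₃`. -/
theorem faceSplit_tt_chain_recursion {N n r₁ r₂ r₃ : ℕ}
    (hN : 0 < N) (hn : 0 < n) (hr₁ : 0 < r₁) (hr₂ : 0 < r₂) (hr₃ : 0 < r₃)
    (U₁ U₂ U₃ : Matrix (Fin N) (Fin n) ℝ)
    (G₁ : Matrix (Fin n) (Fin r₁) ℝ)
    (G₂ : Matrix (Fin n × Fin r₁) (Fin r₂) ℝ)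
    (G₃ : Matrix (Fin n × Fin r₂) (Fin r₃) ℝ) :
    faceSplit U₃ (faceSplit U₂ U₁) *
        ((1 : Matrix (Fin n) (Fin n) ℝ) ⊗ₖ ((1 : Matrix (Fin n) (Fin n) ℝ) ⊗ₖ G₁)) *
        ((1 : Matrix (Fin n) (Fin n) ℝ) ⊗ₖ G₂) * G₃ =
      faceSplit U₃ (faceSplit U₂ (U₁ * G₁) * G₂) * G₃ := by
  rw [faceSplit_mul_one_kron U₃ (faceSplit U₂ U₁),
    faceSplit_mul_one_kron U₂ U₁ G₁, faceSplit_mul_one_kron]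
end
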